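/- arXiv:1512.08786 — 2 statements merged into one kernel-verified Lean document; each statement's English description precedes it below -/
import Mathlib

section
/- Let K be a number field of degree n and let β be a nonzero algebraic integer of K. If Log(β) ∈ Q_k for some index k > r₁ (so that φ_k is a complex embedding) and φ_k(β) ∈ ℝ, then [K : ℚ(β)] = 2; moreover, if φ_k(β) > 0, then φ_k(β) is a Pisot number. -/
open Polynomial NumberField

noncomputable section

/-- A Pisot number: a real algebraic integer `θ > 1` all of whose other conjugates over `ℚ`
have modulus strictly smaller than `1`. -/
def IsPisotNumber (θ : ℝ) : Prop :=
  1 < θ ∧ IsIntegral ℤ θ ∧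
    ∀ z : ℂ, aeval z (minpoly ℚ θ) = 0 → z ≠ (θ : ℂ) → ‖z‖ < 1

/-- A Salem number: a real algebraic integer `θ > 1` all of whose other conjugates over `ℚ`
have modulus at most `1`, with at least one conjugate of modulus exactly `1`. -/
def IsSalemNumber (θ : ℝ) : Prop :=
  1 < θ ∧ IsIntegral ℤ θ ∧
    (∀ z : ℂ, aeval z (minpoly ℚ θ) = 0 → z ≠ (θ : ℂ) → ‖z‖ ≤ 1) ∧
    (∃ z : ℂ, aeval z (minpoly ℚ θ) = 0 ∧ ‖z‖ = 1)

/-- A complex Pisot number: a non-real algebraic integer `θ` with `|θ| > 1` all of whose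
conjugates over `ℚ` other than `θ` and `conj θ` have modulus strictly smaller than `1`. -/
def IsComplexPisotNumber (θ : ℂ) : Prop :=
  θ.im ≠ 0 ∧ 1 < ‖θ‖ ∧ IsIntegral ℤ θ ∧
    ∀ z : ℂ, aeval z (minpoly ℚ θ) = 0 → z ≠ θ → z ≠ (starRingEnd ℂ) θ → ‖z‖ < 1

variable {K : Type*} [Field K]

/-- The `Log` map `x ↦ (log|σ₁ x|, …, log|σ_{r₁} x|, 2 log|τ₁ x|, …, 2 log|τ_{r₂} x|)`,
indexed by `Fin r₁ ⊕ Fin r₂` (real embeddings first, then representatives of the complex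
conjugate pairs). -/
def LogMap {r₁ r₂ : ℕ} (σ : Fin r₁ → (K →+* ℂ)) (τ : Fin r₂ → (K →+* ℂ)) (x : K) :
    Fin r₁ ⊕ Fin r₂ → ℝ :=
  Sum.elim (fun i => Real.log ‖σ i x‖)
    (fun i => 2 * Real.log ‖τ i x‖)

/-- `σ` is the family of the real embeddings of `K` and `τ` a system of representatives of the
conjugate pairs of non-real embeddings: each `σ i` is real-valued, each `τ i` is not, and
`σ, τ, conj ∘ τ` together enumerate all embeddings `K →+* ℂ` without repetition. -/
def IsEmbeddingSystem {r₁ r₂ : ℕ} (σ : Fin r₁ → (K →+* ℂ)) (τ : Fin r₂ → (K →+* ℂ)) : Prop :=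
  (∀ i, ∀ x : K, ((σ i) x).im = 0) ∧
  (∀ i, ∃ x : K, ((τ i) x).im ≠ 0) ∧
  Function.Bijective
    (Sum.elim σ (Sum.elim τ (fun i => (starRingEnd ℂ).comp (τ i))) :
      Fin r₁ ⊕ (Fin r₂ ⊕ Fin r₂) → (K →+* ℂ))

/-- The open region `Q_k = {v : v_k > 0 and v_j < 0 for all j ≠ k}`. -/
def PosQuadrant {ι : Type*} (k : ι) : Set (ι → ℝ) :=
  {v | 0 < v k ∧ ∀ j, j ≠ k → v j < 0}

/-- The half line `l_{k,j} = {v : v_k > 0, v_j = -v_k, v_i = 0 for i ≠ k, j}`. -/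
def SalemLine {ι : Type*} (k j : ι) : Set (ι → ℝ) :=
  {v | 0 < v k ∧ v j = -v k ∧ ∀ i, i ≠ k → i ≠ j → v i = 0}

/-!
Because `Log β ∈ Q_k`, the embeddings `φ` with `|φ β| ≥ 1` are exactly `τ = φ_k` and `conj ∘ τ`.
As `τ β` is real, both extend the same embedding of `ℚ(β)`; since `τ` is not real they are
distinct, and they are the only extensions, so `[K : ℚ(β)] = 2`. Every conjugate of `θ = τ β`
is `φ β` for some embedding `φ`, so every conjugate other than `θ` has modulus `< 1`.
-/

open scoped IntermediateField ComplexConjugate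
open NumberField.ComplexEmbedding

section Embeddings

variable {K : Type*} [Field K] [NumberField K]

theorem RingHom.eqOn_adjoin_simple_of_apply_eq {β : K} {φ ψ : K →+* ℂ} (h : φ β = ψ β) :
    Set.EqOn φ ψ ℚ⟮β⟯ := by
  have hres : φ.toRatAlgHom.comp (ℚ⟮β⟯).val = ψ.toRatAlgHom.comp (ℚ⟮β⟯).val :=
    IntermediateField.adjoin_algHom_ext ℚ fun x hx => by rcases hx with rfl; exact h
  exact fun x hx => AlgHom.congr_fun hres ⟨x, hx⟩

theorem finrank_adjoin_simple_eq_card_apply_eq (β : K) (ψ : K →+* ℂ) :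
    Module.finrank ℚ⟮β⟯ K = Nat.card {φ : K →+* ℂ // φ β = ψ β} := by
  let _ : Algebra ℚ⟮β⟯ ℂ := (ψ.comp (algebraMap ℚ⟮β⟯ K)).toAlgebra
  have hβ : β ∈ ℚ⟮β⟯ := IntermediateField.mem_adjoin_simple_self ℚ β
  -- a `ℚ⟮β⟯`-embedding is an embedding extending `ψ|ℚ⟮β⟯`, i.e. agreeing with `ψ` at `β`
  let e : (K →ₐ[ℚ⟮β⟯] ℂ) ≃ {φ : K →+* ℂ // φ β = ψ β} :=
    { toFun := fun g => ⟨g, g.commutes ⟨β, hβ⟩⟩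
      invFun := fun φ =>
        { (φ : K →+* ℂ) with
          commutes' := fun x => RingHom.eqOn_adjoin_simple_of_apply_eq φ.2 x.2 }
      left_inv := fun _ => rfl
      right_inv := fun _ => rfl }
  rw [← AlgHom.card ℚ⟮β⟯ K ℂ, ← Nat.card_eq_fintype_card, Nat.card_congr e]

theorem finrank_adjoin_simple_eq_two {β : K} {ψ : K →+* ℂ} (hψ : conjugate ψ ≠ ψ)
    (hψβ : conj (ψ β) = ψ β) (h : ∀ φ : K →+* ℂ, φ β = ψ β → φ = ψ ∨ φ = conjugate ψ) :
    Module.finrank ℚ⟮β⟯ K = 2 := by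
  rw [finrank_adjoin_simple_eq_card_apply_eq β ψ, Nat.card_eq_two_iff]
  refine ⟨⟨ψ, rfl⟩, ⟨conjugate ψ, hψβ⟩, fun he => hψ (congrArg Subtype.val he).symm, ?_⟩
  ext ⟨φ, hφ⟩
  simpa [Subtype.ext_iff] using h φ hφ

theorem isPisotNumber_of_norm_lt_one {β : K} (hint : IsIntegral ℤ β) {ψ : K →+* ℂ} {θ : ℝ}
    (hψ : ψ β = θ) (hθ : 1 < θ) (hsmall : ∀ φ : K →+* ℂ, φ β ≠ θ → ‖φ β‖ < 1) :
    IsPisotNumber θ := by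
  refine ⟨hθ, ?_, fun z hz hzθ => ?_⟩
  · have : IsIntegral ℤ (θ : ℂ) := hψ ▸ hint.map ψ.toIntAlgHom
    exact (isIntegral_algebraMap_iff (algebraMap ℝ ℂ).injective).mp this
  · have hmin : minpoly ℚ θ = minpoly ℚ β := by
      rw [← minpoly.algebraMap_eq (algebraMap ℝ ℂ).injective θ, ← minpoly.algHom_eq
        ψ.toRatAlgHom ψ.injective β]
      exact congrArg _ hψ.symm
    have hz' : z ∈ (minpoly ℚ β).rootSet ℂ :=
      Polynomial.mem_rootSet.mpr ⟨minpoly.ne_zero (IsIntegral.of_finite ℚ β), hmin ▸ hz⟩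
    rw [← NumberField.Embeddings.range_eval_eq_rootSet_minpoly] at hz'
    obtain ⟨φ, rfl⟩ := hz'
    exact hsmall φ hzθ

end Embeddings

section LogMap

variable {K : Type*} [Field K] {r₁ r₂ : ℕ} {σ : Fin r₁ → (K →+* ℂ)} {τ : Fin r₂ → (K →+* ℂ)}
  {β : K} {i : Fin r₂}

theorem one_lt_norm_of_logMap_mem_posQuadrant
    (hQ : LogMap σ τ β ∈ PosQuadrant (Sum.inr i : Fin r₁ ⊕ Fin r₂)) : 1 < ‖τ i β‖ := by
  have h := hQ.1
  simp only [LogMap, Sum.elim_inr] at h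
  exact (Real.log_pos_iff (norm_nonneg _)).mp (by linarith)

theorem eq_or_eq_conjugate_of_one_le_norm
    (hsurj : Function.Surjective
      (Sum.elim σ (Sum.elim τ (fun j => (starRingEnd ℂ).comp (τ j))) :
        Fin r₁ ⊕ (Fin r₂ ⊕ Fin r₂) → (K →+* ℂ)))
    (hQ : LogMap σ τ β ∈ PosQuadrant (Sum.inr i : Fin r₁ ⊕ Fin r₂))
    (φ : K →+* ℂ) (hφ : 1 ≤ ‖φ β‖) : φ = τ i ∨ φ = conjugate (τ i) := by
  have hlog : 0 ≤ Real.log ‖φ β‖ := Real.log_nonneg hφ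
  obtain ⟨j | j | j, rfl⟩ := hsurj φ
  · have := hQ.2 (Sum.inl j) Sum.inl_ne_inr
    simp only [LogMap, Sum.elim_inl] at this hlog
    linarith
  · rcases eq_or_ne j i with rfl | hj
    · exact Or.inl rfl
    · have := hQ.2 (Sum.inr j) (by simpa using hj)
      simp only [LogMap, Sum.elim_inr, Sum.elim_inl] at this hlog
      linarith
  · rcases eq_or_ne j i with rfl | hj
    · exact Or.inr rfl
    · have := hQ.2 (Sum.inr j) (by simpa using hj)
      simp only [LogMap, Sum.elim_inr, RingHom.coe_comp, Function.comp_apply,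
        Complex.norm_conj] at this hlog
      linarith

end LogMap

theorem index_two_of_logMap_mem_posQuadrant_complex_real_image_general
    {K : Type*} [Field K] [NumberField K] {r₁ r₂ : ℕ}
    (σ : Fin r₁ → (K →+* ℂ)) (τ : Fin r₂ → (K →+* ℂ))
    (hsys : IsEmbeddingSystem σ τ)
    (β : K) (hint : IsIntegral ℤ β)
    (i : Fin r₂)
    (hQ : LogMap σ τ β ∈ PosQuadrant (Sum.inr i : Fin r₁ ⊕ Fin r₂))
    (hreal : ((τ i) β).im = 0) :
    Module.finrank (IntermediateField.adjoin ℚ {β}) K = 2 ∧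
      (0 < ((τ i) β).re → IsPisotNumber ((τ i) β).re) := by
  obtain ⟨x, hx⟩ := hsys.2.1 i
  have hlarge := one_lt_norm_of_logMap_mem_posQuadrant hQ
  have hconj : conj (τ i β) = τ i β := Complex.conj_eq_iff_im.mpr hreal
  have hkey := eq_or_eq_conjugate_of_one_le_norm hsys.2.2.2 hQ
  have hnonreal : conjugate (τ i) ≠ τ i := fun h =>
    hx (Complex.conj_eq_iff_im.mp (RingHom.congr_fun h x))
  refine ⟨finrank_adjoin_simple_eq_two hnonreal hconj fun φ hφ => hkey φ (hφ ▸ hlarge.le),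
    fun hpos => ?_⟩
  have hθ : τ i β = ((τ i β).re : ℂ) := (Complex.conj_eq_iff_re.mp hconj).symm
  refine isPisotNumber_of_norm_lt_one hint hθ ?_ fun φ hφ => ?_
  · rwa [hθ, Complex.norm_real, Real.norm_of_nonneg hpos.le] at hlarge
  · by_contra hge
    rcases hkey φ (not_lt.mp hge) with rfl | rfl
    · exact hφ hθ
    · exact hφ (hconj.trans hθ)

/-- Proposition, part 4. If `β` is a nonzero algebraic integer of a number
field `K` of degree `n = r₁ + 2r₂`, `Log β ∈ Q_k` for an index `k` corresponding to a complex
embedding `φ_k = τ i`, and `φ_k(β) ∈ ℝ`, then `[K : ℚ(β)] = 2`; moreover if `φ_k(β) > 0` then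
`φ_k(β)` is a Pisot number. -/
theorem index_two_of_logMap_mem_posQuadrant_complex_real_image
    {K : Type*} [Field K] [NumberField K] {r₁ r₂ : ℕ}
    (σ : Fin r₁ → (K →+* ℂ)) (τ : Fin r₂ → (K →+* ℂ))
    (hsys : IsEmbeddingSystem σ τ)
    (hdeg : Module.finrank ℚ K = r₁ + 2 * r₂)
    (β : K) (hβ : β ≠ 0) (hint : IsIntegral ℤ β)
    (i : Fin r₂)
    (hQ : LogMap σ τ β ∈ PosQuadrant (Sum.inr i : Fin r₁ ⊕ Fin r₂))
    (hreal : ((τ i) β).im = 0) :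
    Module.finrank (IntermediateField.adjoin ℚ {β}) K = 2 ∧
      (0 < ((τ i) β).re → IsPisotNumber ((τ i) β).re) :=
  index_two_of_logMap_mem_posQuadrant_complex_real_image_general σ τ hsys β hint i hQ hreal
end
end

section
/- Let K ⊆ ℝ be a real number field. Then there exists a Pisot number β such that K = ℚ(β). -/
/-!
Let `σ : K → ℝ` be the given real embedding. Minkowski's convex body theorem yields a nonzero
algebraic integer `a ∈ K` with `|φ a| < 1` for every complex embedding `φ` not inducing the
place of `σ`. Such an `a` generates `K`, and since `|N(a)| ≥ 1` the product formula forces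
`|σ a| > 1` as soon as `K ≠ ℚ`. The conjugates of `σ a` are the numbers `φ a`, so `σ a` or
`-σ a` is a Pisot number generating `K`; for `K = ℚ` take `β = 2`.
-/

open Polynomial

noncomputable section

open Module NumberField NumberField.InfinitePlace IntermediateField

theorem isPisotNumber_natCast {n : ℕ} (hn : 1 < n) : IsPisotNumber n := by
  refine ⟨mod_cast hn, isIntegral_algebraMap (R := ℤ) (x := (n : ℤ)), fun z hz hne ↦ ?_⟩
  have hmin : minpoly ℚ (n : ℝ) = X - C (n : ℚ) := by
    simpa using minpoly.eq_X_sub_C ℝ (n : ℚ)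
  rw [hmin, map_sub, aeval_X, aeval_C, sub_eq_zero] at hz
  exact absurd (by simpa using hz) hne

theorem IntermediateField.adjoin_simple_neg {F E : Type*} [Field F] [Field E] [Algebra F E]
    (x : E) : F⟮-x⟯ = F⟮x⟯ := by
  refine le_antisymm ?_ ?_ <;> rw [adjoin_simple_le_iff]
  · exact neg_mem (mem_adjoin_simple_self F x)
  · simpa using neg_mem (mem_adjoin_simple_self F (-x))

namespace NumberField.InfinitePlace

variable {K : Type*} [Field K]

def ofRealEmbedding (σ : K →+* ℝ) : InfinitePlace K :=
  mk (Complex.ofRealHom.comp σ)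

theorem _root_.NumberField.ComplexEmbedding.isReal_ofRealHom_comp (σ : K →+* ℝ) :
    ComplexEmbedding.IsReal (Complex.ofRealHom.comp σ) := by
  rw [ComplexEmbedding.isReal_iff]
  ext x
  simp

theorem ofRealEmbedding_apply (σ : K →+* ℝ) (x : K) : ofRealEmbedding σ x = |σ x| := by
  simp [ofRealEmbedding, apply]

theorem isReal_ofRealEmbedding (σ : K →+* ℝ) : IsReal (ofRealEmbedding σ) :=
  ⟨_, ComplexEmbedding.isReal_ofRealHom_comp σ, rfl⟩

variable [NumberField K]

theorem IsReal.exists_ne {w : InfinitePlace K} (hw : IsReal w) (hK : finrank ℚ K ≠ 1) :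
    ∃ z, z ≠ w := by
  by_contra! h
  have huniv : (Finset.univ : Finset (InfinitePlace K)) = {w} := by
    ext z; simp [h z]
  have hsum := sum_mult_eq (K := K)
  rw [huniv, Finset.sum_singleton, hw.mult_eq_one] at hsum
  exact hK hsum.symm

theorem one_lt_of_lt_one {w : InfinitePlace K} {a : 𝓞 K} (ha : a ≠ 0)
    (h : ∀ ⦃z⦄, z ≠ w → z a < 1) (hK : ∃ z, z ≠ w) : 1 < w a := by
  have hnorm : (1 : ℝ) ≤ |Algebra.norm ℚ (a : K)| := by
    rw [← Algebra.coe_norm_int, ← Int.cast_one, ← Int.cast_abs, Rat.cast_intCast, Int.cast_le]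
    exact Int.one_le_abs (Algebra.norm_ne_zero_iff.mpr ha)
  contrapose! hnorm
  obtain ⟨z, hz⟩ := hK
  have hle : ∀ v : InfinitePlace K, v a ≤ 1 := fun v ↦ by
    by_cases hv : v = w
    · exact hv ▸ hnorm
    · exact (h hv).le
  rw [← prod_eq_abs_norm, ← Finset.prod_const_one]
  refine Finset.prod_lt_prod (fun v _ ↦ pow_pos (pos_iff.mpr (by simpa using ha)) _)
    (fun v _ ↦ pow_le_one₀ (apply_nonneg _ _) (hle v))
    ⟨z, Finset.mem_univ z, pow_lt_one₀ (apply_nonneg _ _) (h hz) mult_ne_zero⟩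

open MeasureTheory mixedEmbedding in
theorem IsReal.exists_primitive_lt_one {w₀ : InfinitePlace K} (hw₀ : IsReal w₀) :
    ∃ a : 𝓞 K, a ≠ 0 ∧ ℚ⟮(a : K)⟯ = ⊤ ∧ ∀ ⦃w⦄, w ≠ w₀ → w a < 1 := by
  classical
  obtain ⟨n, hn⟩ := ENNReal.exists_nat_gt (minkowskiBound_lt_top K 1).ne
  have hvol : minkowskiBound K 1 <
      volume (convexBodyLT K (fun w ↦ if w = w₀ then (n : NNReal) else 1)) := by
    rw [convexBodyLT_volume, ← Finset.prod_erase_mul _ _ (Finset.mem_univ w₀)]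
    simp_rw [ite_pow, one_pow, Finset.prod_ite_eq', Finset.notMem_erase, ite_false,
      hw₀.mult_eq_one, pow_one, one_mul]
    calc minkowskiBound K 1 < n := hn
      _ = 1 * ((n : NNReal) : ENNReal) := by simp
      _ ≤ convexBodyLTFactor K * (n : NNReal) := by
        gcongr; exact_mod_cast one_le_convexBodyLTFactor K
  obtain ⟨a, ha, hlt⟩ := exists_ne_zero_mem_ringOfIntegers_lt K hvol
  have hlt' : ∀ ⦃w⦄, w ≠ w₀ → w a < 1 := fun w hw ↦ by simpa [hw] using hlt w
  exact ⟨a, ha, is_primitive_element_of_infinitePlace_lt ha hlt' (Or.inl hw₀), hlt'⟩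

end NumberField.InfinitePlace

namespace NumberField

open InfinitePlace

variable {K : Type*} [Field K] [NumberField K]

theorem exists_primitive_one_lt_and_lt_one (σ : K →+* ℝ) (hK : finrank ℚ K ≠ 1) :
    ∃ x : 𝓞 K, ℚ⟮(x : K)⟯ = ⊤ ∧ 1 < σ x ∧ ∀ ⦃w⦄, w ≠ ofRealEmbedding σ → w x < 1 := by
  have hσ := isReal_ofRealEmbedding σ
  obtain ⟨a, ha, hprim, hlt⟩ := hσ.exists_primitive_lt_one
  have h1 := one_lt_of_lt_one ha hlt (hσ.exists_ne hK)
  rw [ofRealEmbedding_apply, lt_abs] at h1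
  rcases h1 with hpos | hneg
  · exact ⟨a, hprim, hpos, hlt⟩
  · have hcoe : ((-a : 𝓞 K) : K) = -(a : K) := by push_cast; rfl
    refine ⟨-a, by rwa [hcoe, adjoin_simple_neg], by rwa [hcoe, map_neg], fun w hw ↦ ?_⟩
    rw [hcoe, coe_apply, AbsoluteValue.map_neg, ← coe_apply]
    exact hlt hw

theorem isPisotNumber_of_one_lt_of_lt_one (σ : K →+* ℝ) (x : 𝓞 K) (h1 : 1 < σ x)
    (hlt : ∀ ⦃w⦄, w ≠ ofRealEmbedding σ → w x < 1) : IsPisotNumber (σ x) := by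
  refine ⟨h1, (RingOfIntegers.isIntegral_coe x).map σ.toIntAlgHom, fun z hz hne ↦ ?_⟩
  have hmin : minpoly ℚ (σ x) = minpoly ℚ (x : K) :=
    minpoly.algHom_eq σ.toRatAlgHom σ.injective _
  rw [hmin] at hz
  obtain ⟨φ, rfl⟩ : z ∈ Set.range fun φ : K →+* ℂ ↦ φ x := by
    rw [Embeddings.range_eval_eq_rootSet_minpoly, mem_rootSet]
    exact ⟨minpoly.ne_zero (IsIntegral.of_finite ℚ _), hz⟩
  have hφ : InfinitePlace.mk φ ≠ ofRealEmbedding σ := by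
    rintro hφ
    rcases mk_eq_iff.mp hφ with rfl | hconj
    · exact hne rfl
    · have hreal := ComplexEmbedding.isReal_iff.mp (ComplexEmbedding.isReal_ofRealHom_comp σ)
      rw [← hreal] at hconj
      exact hne (by rw [(ComplexEmbedding.involutive_conjugate K).injective hconj]; rfl)
  exact hlt hφ

end NumberField

/-- Salem. Every real number field `K ⊆ ℝ` is generated over `ℚ` by a
Pisot number. -/
theorem exists_pisot_generator (K : IntermediateField ℚ ℝ) [FiniteDimensional ℚ ↥K] :
    ∃ β : ℝ, IsPisotNumber β ∧ IntermediateField.adjoin ℚ {β} = K := by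
  rcases eq_or_ne K ⊥ with rfl | hK
  · exact ⟨2, mod_cast isPisotNumber_natCast one_lt_two,
      adjoin_simple_eq_bot_iff.mpr (IntermediateField.natCast_mem ⊥ 2)⟩
  have : NumberField K := ⟨⟩
  obtain ⟨x, hprim, h1, hlt⟩ :=
    exists_primitive_one_lt_and_lt_one (algebraMap K ℝ) (finrank_eq_one_iff.not.mpr hK)
  refine ⟨x, isPisotNumber_of_one_lt_of_lt_one _ x h1 hlt, ?_⟩
  -- `hprim` uses the ℚ-algebra structure of the number field `K`, which agrees with that of the
  -- intermediate field only up to unfolding, so `rw` cannot chain these equalities.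
  calc ℚ⟮((x : K) : ℝ)⟯ = lift ℚ⟮(x : K)⟯ := (lift_adjoin_simple ℚ K x).symm
    _ = lift ⊤ := congrArg lift hprim
    _ = K := lift_top ℚ K

end
end
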